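/- A graded two-sided ideal J of F̄ with C ⊆ J is saturated if and only if for every f ∈ F̄, t·f ∈ J implies f ∈ J. -/

import Mathlib

noncomputable section

/-! ### Common definitions for the letterplace correspondence (La Scala)

`FA K Y` is the free associative algebra `K⟨Y⟩` (monoid algebra of the free monoid on `Y`);
`PL K Y` is the letterplace polynomial algebra `K[y(j) : y ∈ Y, j ∈ ℕ*]`.
The algebra `F̄ = K⟨X ∪ {t}⟩` is modeled as `FA K (Option X)` with `t = none`,
and similarly `P̄ = PL K (Option X)`. -/

/-- The free associative algebra `K⟨Y⟩`. -/
abbrev FA (K : Type*) [CommSemiring K] (Y : Type*) := MonoidAlgebra K (FreeMonoid Y)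

/-- The letterplace polynomial algebra `K[y(j)]`, with places in `ℕ* = ℕ+`. -/
abbrev PL (K : Type*) [CommSemiring K] (Y : Type*) := MvPolynomial (Y × ℕ+) K

variable (K : Type*) [Field K]

/-- The generator of `K⟨Y⟩` corresponding to a letter. -/
def gen {Y : Type*} (y : Y) : FA K Y := MonoidAlgebra.of K (FreeMonoid Y) (FreeMonoid.of y)

/-- The extra letter `t` of `F̄ = K⟨X ∪ {t}⟩`. -/
def tv {X : Type*} : FA K (Option X) := gen K (none : Option X)

/-- `φ : F̄ → F̄`, the algebra endomorphism with `φ(x_i) = x_i`, `φ(t) = 1`. -/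
def phi {X : Type*} : FA K (Option X) →ₐ[K] FA K (Option X) :=
  (MonoidAlgebra.lift K (FA K (Option X)) (FreeMonoid (Option X)))
    (FreeMonoid.lift fun o => Option.elim o 1 (fun x => gen K (some x)))

/-- `f` is homogeneous of degree `d` (all words in its support have length `d`). -/
def IsHomog {Y : Type*} (d : ℕ) (f : FA K Y) : Prop :=
  ∀ w ∈ f.coeff.support, FreeMonoid.length w = d

/-- The homogeneous component of degree `d` of `f ∈ K⟨Y⟩`. -/
def homComp {Y : Type*} (d : ℕ) (f : FA K Y) : FA K Y :=
  ∑ w ∈ f.coeff.support.filter (fun w => FreeMonoid.length w = d), MonoidAlgebra.single w (f.coeff w)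

/-- A two-sided ideal is graded (for the grading by total degree) iff it contains all
homogeneous components of its elements. -/
def IsGradedF {Y : Type*} (I : TwoSidedIdeal (FA K Y)) : Prop := ∀ f ∈ I, ∀ d, homComp K d f ∈ I

/-- `C ⊆ F̄`: the two-sided ideal generated by all homogeneous elements of `ker φ`,
i.e. the largest graded ideal contained in `ker φ`. -/
def Cideal {X : Type*} : TwoSidedIdeal (FA K (Option X)) :=
  TwoSidedIdeal.span {f | (∃ d, IsHomog K d f) ∧ phi K f = 0}

/-- The embedding of free monoids `X* → (X ∪ {t})*`. -/
def embWord {X : Type*} : FreeMonoid X →* FreeMonoid (Option X) := FreeMonoid.map some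

/-- The canonical embedding `F = K⟨X⟩ → F̄ = K⟨X ∪ {t}⟩`. -/
def emb {X : Type*} : FA K X →ₐ[K] FA K (Option X) :=
  (MonoidAlgebra.lift K (FA K (Option X)) (FreeMonoid X))
    ((MonoidAlgebra.of K (FreeMonoid (Option X))).comp embWord)

/-- The top degree `deg(f)` of `f` (max length of a word in the support). -/
def degF {Y : Type*} (f : FA K Y) : ℕ := f.coeff.support.sup FreeMonoid.length

/-- The homogenization `f^* = Σ_k f_k t^{deg f − k} ∈ F̄` of `f ∈ F`. -/
def hstar {X : Type*} (f : FA K X) : FA K (Option X) :=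
  ∑ w ∈ f.coeff.support,
    MonoidAlgebra.single
      (embWord w * (FreeMonoid.of (none : Option X)) ^ (degF K f - FreeMonoid.length w)) (f.coeff w)

/-- Homogenization of an element already written in `F̄` (used for elements of `φ(F̄) = F`). -/
def hstarO {X : Type*} (f : FA K (Option X)) : FA K (Option X) :=
  ∑ w ∈ f.coeff.support,
    MonoidAlgebra.single
      (w * (FreeMonoid.of (none : Option X)) ^ (degF K f - FreeMonoid.length w)) (f.coeff w)

/-- The homogenization `I^*` of an ideal `I ⊆ F`: the two-sided ideal of `F̄` generated by all
homogeneous elements of `φ⁻¹(I)` (identifying `F` with its image in `F̄`). -/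
def hstarIdeal {X : Type*} (I : TwoSidedIdeal (FA K X)) : TwoSidedIdeal (FA K (Option X)) :=
  TwoSidedIdeal.span {g | (∃ d, IsHomog K d g) ∧ ∃ f ∈ I, phi K g = emb K f}

/-- The saturation `Sat(J) = φ(J)^*` of a graded ideal `C ⊆ J ⊆ F̄`: the two-sided ideal
generated by all homogeneous elements `g` with `φ(g) ∈ φ(J)`. -/
def SatF {X : Type*} (J : TwoSidedIdeal (FA K (Option X))) : TwoSidedIdeal (FA K (Option X)) :=
  TwoSidedIdeal.span {g | (∃ d, IsHomog K d g) ∧ ∃ h ∈ J, phi K g = phi K h}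

/-! ### The commutative (letterplace) side -/

/-- The shift of letterplace variables: `k · y(j) = y(j + k)`. -/
def shiftVar {Y : Type*} (k : ℕ) (p : Y × ℕ+) : Y × ℕ+ :=
  (p.1, ⟨p.2 + k, Nat.add_pos_left p.2.2 k⟩)

/-- The action of `k ∈ ℕ` on the letterplace algebra. -/
def shift {Y : Type*} (k : ℕ) : PL K Y →ₐ[K] PL K Y := MvPolynomial.rename (shiftVar k)

/-- An ideal of `PL K Y` is an ℕ-ideal if it is stable under all shifts. -/
def IsNIdeal {Y : Type*} (I : Ideal (PL K Y)) : Prop := ∀ k, ∀ f ∈ I, shift K k f ∈ I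

/-- The ℕ-ideal `⟨S⟩_ℕ` generated by a set `S`. -/
def nspan {Y : Type*} (S : Set (PL K Y)) : Ideal (PL K Y) :=
  Ideal.span {g | ∃ k, ∃ f ∈ S, g = shift K k f}

/-- The place multidegree `∂(m)` of a monomial. -/
def placeDeg {Y : Type*} (m : (Y × ℕ+) →₀ ℕ) : ℕ+ →₀ ℕ := Finsupp.mapDomain Prod.snd m

/-- `f` is multihomogeneous of place multidegree `μ`. -/
def IsMultiHomog {Y : Type*} (μ : ℕ+ →₀ ℕ) (f : PL K Y) : Prop :=
  ∀ m ∈ f.support, placeDeg m = μ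

/-- The multihomogeneous component of multidegree `μ` of `f`. -/
def mComp {Y : Type*} (μ : ℕ+ →₀ ℕ) (f : PL K Y) : PL K Y :=
  ∑ m ∈ f.support.filter (fun m => placeDeg m = μ),
    MvPolynomial.monomial m (MvPolynomial.coeff m f)

/-- An ideal is multigraded iff it contains all multihomogeneous components of its elements. -/
def IsMultiGraded {Y : Type*} (I : Ideal (PL K Y)) : Prop := ∀ f ∈ I, ∀ μ, mComp K μ f ∈ I

/-- `ψ : P̄ → P̄`, with `ψ(x_i(j)) = x_i(j)` and `ψ(t(j)) = 1`. -/
def psi {X : Type*} : PL K (Option X) →ₐ[K] PL K (Option X) :=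
  MvPolynomial.aeval (fun p => Option.elim p.1 1 (fun x => MvPolynomial.X (some x, p.2)))

/-- The canonical embedding `P → P̄`. -/
def embP {X : Type*} : PL K X →ₐ[K] PL K (Option X) :=
  MvPolynomial.rename (fun p => (some p.1, p.2))

/-- The top multidegree `∂(f)` of `f` (componentwise max over the support). -/
def topDeg {Y : Type*} (f : PL K Y) : ℕ+ →₀ ℕ := f.support.sup placeDeg

/-- The pure-`t` monomial `∏_k t(k)^{ν_k}` with exponents `ν`. -/
def tExp {X : Type*} (ν : ℕ+ →₀ ℕ) : ((Option X) × ℕ+) →₀ ℕ :=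
  Finsupp.mapDomain (fun k => ((none : Option X), k)) ν

/-- The multihomogenization `f^* = Σ_μ f_μ ∏_k t(k)^{ν_k − μ_k} ∈ P̄` of `f ∈ P`. -/
def mhstar {X : Type*} (f : PL K X) : PL K (Option X) :=
  ∑ m ∈ f.support,
    MvPolynomial.monomial
      (Finsupp.mapDomain (fun p => ((some p.1 : Option X), p.2)) m +
        tExp (topDeg K f - placeDeg m))
      (MvPolynomial.coeff m f)

/-- Multihomogenization of an element already written in `P̄` (used for elements of `ψ(P̄) = P`). -/
def mhstarO {X : Type*} (f : PL K (Option X)) : PL K (Option X) :=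
  ∑ m ∈ f.support,
    MvPolynomial.monomial (m + tExp (topDeg K f - placeDeg m)) (MvPolynomial.coeff m f)

/-- The multihomogenization `I^*` of an ℕ-ideal `I ⊆ P`: the ℕ-ideal of `P̄` generated by all
multihomogeneous elements of `ψ⁻¹(I)` (identifying `P` with its image in `P̄`). -/
def mhstarIdeal {X : Type*} (I : Ideal (PL K X)) : Ideal (PL K (Option X)) :=
  nspan K {g | (∃ μ, IsMultiHomog K μ g) ∧ ∃ f ∈ I, psi K g = embP K f}

/-- The saturation `Sat(J) = ψ(J)^*` of a multigraded ℕ-ideal `J ⊆ P̄`. -/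
def SatP {X : Type*} (J : Ideal (PL K (Option X))) : Ideal (PL K (Option X)) :=
  nspan K {g | (∃ μ, IsMultiHomog K μ g) ∧ ∃ h ∈ J, psi K g = psi K h}

/-! ### The letterplace embedding -/

/-- Exponent vector of the letterplace monomial `y_1(n+1) y_2(n+2) ⋯` of a word. -/
def wordExpAux {Y : Type*} : ℕ → List Y → ((Y × ℕ+) →₀ ℕ)
  | _, [] => 0
  | n, y :: w => Finsupp.single (y, ⟨n + 1, n.succ_pos⟩) 1 + wordExpAux (n + 1) w

/-- The letterplace monomial `y_1(1) y_2(2) ⋯ y_d(d)` of a word `y_1 y_2 ⋯ y_d`. -/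
def wordExp {Y : Type*} (w : FreeMonoid Y) : (Y × ℕ+) →₀ ℕ := wordExpAux 0 (FreeMonoid.toList w)

/-- The letterplace embedding `ι : K⟨Y⟩ → PL K Y` (a `K`-linear map). -/
def iota {Y : Type*} (f : FA K Y) : PL K Y :=
  Finsupp.sum f.coeff fun w c => MvPolynomial.monomial (wordExp w) c

/-- The set `L` of multilinear elements of `PL K Y`: multihomogeneous elements of `V = Im ι`. -/
def Lset {Y : Type*} : Set (PL K Y) :=
  {f | f ∈ Set.range (iota K (Y := Y)) ∧ ∃ μ, IsMultiHomog K μ f}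

/-- A letterplace ideal (`L`-ideal): an ℕ-ideal ℕ-generated by its multilinear elements. -/
def IsLPIdeal {Y : Type*} (J : Ideal (PL K Y)) : Prop :=
  IsNIdeal K J ∧ J = nspan K ((J : Set (PL K Y)) ∩ Lset K)

/-- The generators `x_i(1)t(2) − t(1)x_i(2)` of `D`. -/
def Dgens (X : Type*) : Set (PL K (Option X)) :=
  {g | ∃ x : X,
    g = MvPolynomial.X ((some x : Option X), (1 : ℕ+)) *
          MvPolynomial.X ((none : Option X), (2 : ℕ+)) -
        MvPolynomial.X ((none : Option X), (1 : ℕ+)) *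
          MvPolynomial.X ((some x : Option X), (2 : ℕ+))}

/-- The generators `ῑ([t, x_i]) = t(1)x_i(2) − x_i(1)t(2)` of `D`. -/
def DgensT (X : Type*) : Set (PL K (Option X)) :=
  {g | ∃ x : X,
    g = MvPolynomial.X ((none : Option X), (1 : ℕ+)) *
          MvPolynomial.X ((some x : Option X), (2 : ℕ+)) -
        MvPolynomial.X ((some x : Option X), (1 : ℕ+)) *
          MvPolynomial.X ((none : Option X), (2 : ℕ+))}

/-- `D ⊆ P̄`: the letterplace analogue of `C`. -/
def Did (X : Type*) : Ideal (PL K (Option X)) := nspan K (Dgens K X)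

/-- The product `∏_{d < k ≤ d'} t(k)`. -/
def tProd (X : Type*) (d d' : ℕ) : PL K (Option X) :=
  ∏ k ∈ Finset.range (d' - d), MvPolynomial.X ((none : Option X), ⟨d + k + 1, Nat.succ_pos _⟩)

/-- The `L`-saturation `Sat_L(J)` of a letterplace ideal `D ⊆ J ⊆ P̄`. -/
def SatL {X : Type*} (J : Ideal (PL K (Option X))) : Ideal (PL K (Option X)) :=
  nspan K {f | f ∈ Lset K ∧ ∃ d', MvPolynomial.totalDegree f ≤ d' ∧
    tProd K X (MvPolynomial.totalDegree f) d' * f ∈ J}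

/-- `J` is `L`-saturated: `t(d+1)·f ∈ J` with `f` multilinear of degree `d` implies `f ∈ J`. -/
def IsLSat {X : Type*} (J : Ideal (PL K (Option X))) : Prop :=
  ∀ f ∈ Lset K (Y := Option X),
    MvPolynomial.X ((none : Option X), ⟨MvPolynomial.totalDegree f + 1, Nat.succ_pos _⟩) * f ∈ J
      → f ∈ J

/-! ### Monomial orderings -/

/-- The shift action on letterplace monomials. -/
def shiftMon {Y : Type*} (k : ℕ) (m : (Y × ℕ+) →₀ ℕ) : (Y × ℕ+) →₀ ℕ :=
  Finsupp.mapDomain (shiftVar k) m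

/-- A monomial ordering of a (possibly infinite) commutative polynomial ring, given as a strict
order relation on exponent vectors: a well-founded strict total order with `1` minimal,
compatible with multiplication of monomials. -/
structure IsMonOrd {σ : Type*} (r : (σ →₀ ℕ) → (σ →₀ ℕ) → Prop) : Prop where
  total : ∀ m n, r m n ∨ m = n ∨ r n m
  irrefl : ∀ m, ¬ r m m
  trans : ∀ a b c, r a b → r b c → r a c
  wf : WellFounded r
  zero_min : ∀ m, ¬ r m 0
  add_compat : ∀ m n u, r m n → r (u + m) (u + n)

/-- The ordering is compatible with the ℕ-action (an `ℕ`-ordering). -/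
def IsNCompat {Y : Type*} (r : ((Y × ℕ+) →₀ ℕ) → ((Y × ℕ+) →₀ ℕ) → Prop) : Prop :=
  ∀ (k : ℕ) m n, r m n → r (shiftMon k m) (shiftMon k n)

/-- The weight of a letterplace monomial: the largest place index occurring in it
(`⊥ = -∞` for the monomial `1`). -/
def wt {Y : Type*} (m : (Y × ℕ+) →₀ ℕ) : WithBot ℕ :=
  m.support.sup (fun p => ((p.2 : ℕ) : WithBot ℕ))

/-- A weighted ordering: smaller weight implies smaller monomial. -/
def IsWeighted {Y : Type*} (r : ((Y × ℕ+) →₀ ℕ) → ((Y × ℕ+) →₀ ℕ) → Prop) : Prop :=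
  ∀ m n, wt m < wt n → r m n

/-- A monomial ordering of the free algebra `K⟨Y⟩`: a well-founded strict total order on words
compatible with two-sided multiplication. -/
structure IsWordOrd {Y : Type*} (r : FreeMonoid Y → FreeMonoid Y → Prop) : Prop where
  total : ∀ m n, r m n ∨ m = n ∨ r n m
  irrefl : ∀ m, ¬ r m m
  trans : ∀ a b c, r a b → r b c → r a c
  wf : WellFounded r
  mul_compat : ∀ m n u v, r m n → r (u * m * v) (u * n * v)

/-- A word ordering is graded if shorter words are smaller. -/
def IsGradedWordOrd {Y : Type*} (r : FreeMonoid Y → FreeMonoid Y → Prop) : Prop :=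
  ∀ m n, FreeMonoid.length m < FreeMonoid.length n → r m n

/-- The word ordering of `K⟨Y⟩` induced by a monomial ordering of `PL K Y` via `ι`. -/
def inducedWordOrd {Y : Type*} (r : ((Y × ℕ+) →₀ ℕ) → ((Y × ℕ+) →₀ ℕ) → Prop)
    (m n : FreeMonoid Y) : Prop := r (wordExp m) (wordExp n)

/-- The factor of a letterplace monomial at place `j` (a monomial of `P(j) ≅ P(1)`). -/
def fiber {Y : Type*} (m : (Y × ℕ+) →₀ ℕ) (j : ℕ+) : Y →₀ ℕ :=
  Finsupp.comapDomain (fun y => (y, j)) m (fun _ _ _ _ h => congrArg Prod.fst h)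

/-- The place `ℕ`-ordering of `PL K Y` induced by a monomial ordering `r1` of `P(1)`:
compare the factors at the highest place where the two monomials differ. -/
def placeExt {Y : Type*} (r1 : (Y →₀ ℕ) → (Y →₀ ℕ) → Prop)
    (m n : (Y × ℕ+) →₀ ℕ) : Prop :=
  ∃ j : ℕ+, r1 (fiber m j) (fiber n j) ∧ ∀ j', j < j' → fiber m j' = fiber n j'

/-! ### Leading monomials and Gröbner bases -/

/-- `m` is the leading monomial of `f ∈ PL K Y` with respect to the ordering `r`. -/
def IsLM {Y : Type*} (r : ((Y × ℕ+) →₀ ℕ) → ((Y × ℕ+) →₀ ℕ) → Prop)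
    (f : PL K Y) (m : (Y × ℕ+) →₀ ℕ) : Prop :=
  m ∈ f.support ∧ ∀ m' ∈ f.support, m' ≠ m → r m' m

/-- `LM(S)`: the ideal generated by the leading monomials of the nonzero elements of `S`. -/
def LMideal {Y : Type*} (r : ((Y × ℕ+) →₀ ℕ) → ((Y × ℕ+) →₀ ℕ) → Prop)
    (S : Set (PL K Y)) : Ideal (PL K Y) :=
  Ideal.span {p | ∃ f ∈ S, f ≠ 0 ∧ ∃ m, IsLM K r f m ∧ p = MvPolynomial.monomial m (1 : K)}

/-- The ideal generated by `ℕ·lm(G)`. -/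
def shLMideal {Y : Type*} (r : ((Y × ℕ+) →₀ ℕ) → ((Y × ℕ+) →₀ ℕ) → Prop)
    (G : Set (PL K Y)) : Ideal (PL K Y) :=
  Ideal.span {p | ∃ g ∈ G, g ≠ 0 ∧ ∃ m, IsLM K r g m ∧
    ∃ k : ℕ, p = MvPolynomial.monomial (shiftMon k m) (1 : K)}

/-- `G ⊆ I` is a Gröbner `ℕ`-basis of the ℕ-ideal `I`: `ℕ·lm(G)` generates `LM(I)`. -/
def IsGroebnerNB {Y : Type*} (r : ((Y × ℕ+) →₀ ℕ) → ((Y × ℕ+) →₀ ℕ) → Prop)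
    (I : Ideal (PL K Y)) (G : Set (PL K Y)) : Prop :=
  G ⊆ (I : Set (PL K Y)) ∧ shLMideal K r G = LMideal K r (I : Set (PL K Y))

/-- `G` is a Gröbner `L`-basis of the letterplace ideal `J`: `G ⊆ J ∩ L` and the leading monomial
of every nonzero multilinear element of `J` is divisible by a shift of some `lm(g)`, `g ∈ G`. -/
def IsGroebnerLB {Y : Type*} (r : ((Y × ℕ+) →₀ ℕ) → ((Y × ℕ+) →₀ ℕ) → Prop)
    (J : Ideal (PL K Y)) (G : Set (PL K Y)) : Prop :=
  G ⊆ (J : Set (PL K Y)) ∩ Lset K ∧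
  ∀ f ∈ (J : Set (PL K Y)) ∩ Lset K, f ≠ 0 →
    ∃ g ∈ G, ∃ (k : ℕ) (mg mf : (Y × ℕ+) →₀ ℕ),
      IsLM K r g mg ∧ IsLM K r f mf ∧ shiftMon k mg ≤ mf

/-- `w` is the leading monomial (word) of `f ∈ K⟨Y⟩` with respect to the word ordering `r'`. -/
def IsLMF {Y : Type*} (r' : FreeMonoid Y → FreeMonoid Y → Prop)
    (f : FA K Y) (w : FreeMonoid Y) : Prop :=
  w ∈ f.coeff.support ∧ ∀ w' ∈ f.coeff.support, w' ≠ w → r' w' w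

/-- `G ⊆ I` is a Gröbner basis of the two-sided ideal `I ⊆ K⟨Y⟩`: the leading word of every
nonzero `f ∈ I` has the form `u · lm(g) · v` for some nonzero `g ∈ G`. -/
def IsGroebnerBF {Y : Type*} (r' : FreeMonoid Y → FreeMonoid Y → Prop)
    (I : TwoSidedIdeal (FA K Y)) (G : Set (FA K Y)) : Prop :=
  G ⊆ (I : Set (FA K Y)) ∧
  ∀ f ∈ I, f ≠ 0 → ∃ g ∈ G, g ≠ 0 ∧ ∃ (u v wf wg : FreeMonoid Y),
    IsLMF K r' f wf ∧ IsLMF K r' g wg ∧ wf = u * wg * v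

/-! ### Normal forms -/

/-- The generators `x_i(1) x_j(1)` of `N`. -/
def Ngens (Y : Type*) : Set (PL K Y) :=
  {g | ∃ i j : Y, g = MvPolynomial.X (i, (1 : ℕ+)) * MvPolynomial.X (j, (1 : ℕ+))}

/-- A polynomial is in normal form modulo `N` iff in each of its monomials all place indices
are pairwise distinct. -/
def NormalModN {Y : Type*} (f : PL K Y) : Prop :=
  ∀ m ∈ f.support, ∀ k : ℕ+, placeDeg m k ≤ 1

/-- A polynomial is in normal form modulo `D` iff none of its monomials is divisible by a shift
of the leading monomial of some generator `t(1)x_i(2) − x_i(1)t(2)` of `D`. -/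
def NormalModD {X : Type*} (r : (((Option X) × ℕ+) →₀ ℕ) → (((Option X) × ℕ+) →₀ ℕ) → Prop)
    (f : PL K (Option X)) : Prop :=
  ∀ m ∈ f.support, ∀ g ∈ DgensT K X, ∀ mg, IsLM K r g mg → ∀ k : ℕ, ¬ shiftMon k mg ≤ m

/-- `G` is a Gröbner `L`-basis of `J` modulo `D`: its elements are multilinear elements of `J`
in normal form modulo `D`, and together with the generators of `D` they form a
Gröbner `L`-basis of `J`. -/
def IsGroebnerLBmodD {X : Type*}
    (r : (((Option X) × ℕ+) →₀ ℕ) → (((Option X) × ℕ+) →₀ ℕ) → Prop)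
    (J : Ideal (PL K (Option X))) (G : Set (PL K (Option X))) : Prop :=
  (∀ g ∈ G, g ∈ (J : Set (PL K (Option X))) ∩ Lset K ∧ NormalModD K r g) ∧
  IsGroebnerLB K r J (G ∪ DgensT K X)

/-- The commutators `[t, x_i] = t x_i − x_i t` in `F̄`. -/
def commGens (X : Type*) : Set (FA K (Option X)) :=
  {h | ∃ x : X, h = tv K * gen K (some x) - gen K (some x) * tv K}

/-- A polynomial of `F̄` is in normal form modulo `C` iff none of its words contains the leading
word of some commutator `[t, x_i]` as a factor. -/
def NormalModC {X : Type*} (r' : FreeMonoid (Option X) → FreeMonoid (Option X) → Prop)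
    (f : FA K (Option X)) : Prop :=
  ∀ w ∈ f.coeff.support, ∀ g ∈ commGens K X, ∀ wg, IsLMF K r' g wg →
    ¬ ∃ u v, w = u * wg * v

/-! ### Concrete orderings on words -/

/-- The order on the letters of `X ∪ {t}` (with `X = ℕ`): `t ≺ x_1 ≺ x_2 ≺ ⋯`. -/
def optLt : Option ℕ → Option ℕ → Prop
  | none, some _ => True
  | some i, some j => i < j
  | _, none => False

/-- The graded right lexicographic ordering on words: first compare lengths, then compare
letter by letter from the right. -/
def grRightLex {Y : Type*} (lt : Y → Y → Prop) (dflt : Y) (m n : FreeMonoid Y) : Prop :=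
  FreeMonoid.length m < FreeMonoid.length n ∨
  (FreeMonoid.length m = FreeMonoid.length n ∧
    ∃ t < FreeMonoid.length m,
      lt ((FreeMonoid.toList m).getD t dflt) ((FreeMonoid.toList n).getD t dflt) ∧
      ∀ s, t < s → (FreeMonoid.toList m).getD s dflt = (FreeMonoid.toList n).getD s dflt)

end

/-! The direction `Sat(J) = J ⇒ (t f ∈ J ⇒ f ∈ J)` holds because `φ(f_d) = φ(t f_d)` and
`t f_d = (t f)_{d+1} ∈ J`, so every homogeneous component `f_d` lies in `Sat(J)`.
Conversely, let `g` be homogeneous of degree `d` with `φ(g) = φ(h)`, `h ∈ J`, `M = deg h`.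
Then `t^M g - Σ_k t^{M+d-k} h_k` is homogeneous with `φ = 0`, hence lies in `C ⊆ J`; the sum lies
in `J` because `J` is graded, so `t^M g ∈ J`, and cancelling `t` gives `g ∈ J`. -/

section Homogeneous

variable {K : Type*} [Field K] {Y : Type*}

lemma isHomog_iff_mem_supported (d : ℕ) (f : FA K Y) :
    IsHomog K d f ↔ f ∈ MonoidAlgebra.supported K K {w | FreeMonoid.length w = d} :=
  Iff.rfl

lemma IsHomog.sub {d : ℕ} {f g : FA K Y} (hf : IsHomog K d f) (hg : IsHomog K d g) :
    IsHomog K d (f - g) := by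
  rw [isHomog_iff_mem_supported] at *
  exact sub_mem hf hg

lemma isHomog_sum {ι : Type*} (d : ℕ) (s : Finset ι) (f : ι → FA K Y)
    (hf : ∀ i ∈ s, IsHomog K d (f i)) : IsHomog K d (∑ i ∈ s, f i) := by
  simp only [isHomog_iff_mem_supported] at *
  exact sum_mem hf

lemma IsHomog.mul {a b : ℕ} {f g : FA K Y} (hf : IsHomog K a f) (hg : IsHomog K b g) :
    IsHomog K (a + b) (f * g) := by
  classical
  intro w hw
  obtain ⟨u, hu, v, hv, rfl⟩ := Finset.mem_mul.1 (MonoidAlgebra.support_coeff_mul_subset f g hw)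
  rw [FreeMonoid.length_mul, hf u hu, hg v hv]

lemma isHomog_one : IsHomog K 0 (1 : FA K Y) := by
  intro w hw
  rw [Finset.mem_one.1 (MonoidAlgebra.support_coeff_one_subset hw), FreeMonoid.length_one]

lemma isHomog_gen (y : Y) : IsHomog K 1 (gen K y) := by
  intro w hw
  rw [Finset.mem_singleton.1 (Finsupp.support_single_subset hw), FreeMonoid.length_of]

lemma isHomog_gen_pow (y : Y) (m : ℕ) : IsHomog K m (gen K y ^ m) := by
  induction m with
  | zero => exact isHomog_one
  | succ m ih => rw [pow_succ]; exact ih.mul (isHomog_gen y)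

lemma coeff_homComp (d : ℕ) (f : FA K Y) (w : FreeMonoid Y) :
    (homComp K d f).coeff w = if FreeMonoid.length w = d then f.coeff w else 0 := by
  classical
  simp only [homComp, MonoidAlgebra.coeff_sum, Finsupp.finsetSum_apply, MonoidAlgebra.coeff_single,
    Finsupp.single_apply, Finset.sum_ite_eq', Finset.mem_filter, Finsupp.mem_support_iff]
  split_ifs <;> simp_all

lemma isHomog_homComp (d : ℕ) (f : FA K Y) : IsHomog K d (homComp K d f) := by
  intro w hw
  by_contra h
  exact Finsupp.mem_support_iff.1 hw (by rw [coeff_homComp, if_neg h])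

lemma sum_homComp (f : FA K Y) :
    ∑ d ∈ Finset.range (degF K f + 1), homComp K d f = f := by
  have hmaps : ∀ w ∈ f.coeff.support, FreeMonoid.length w ∈ Finset.range (degF K f + 1) :=
    fun w hw => Finset.mem_range.2 (Nat.lt_succ_of_le (Finset.le_sup hw))
  unfold homComp
  rw [Finset.sum_fiberwise_of_maps_to hmaps]
  exact MonoidAlgebra.sum_coeff_single f

lemma homComp_add (d : ℕ) (f g : FA K Y) :
    homComp K d (f + g) = homComp K d f + homComp K d g := by
  ext w
  simp only [MonoidAlgebra.coeff_add, Finsupp.add_apply, coeff_homComp]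
  split_ifs <;> simp

lemma homComp_single (d : ℕ) (w : FreeMonoid Y) (c : K) :
    homComp K d (MonoidAlgebra.single w c) =
      if FreeMonoid.length w = d then MonoidAlgebra.single w c else 0 := by
  ext v
  rw [coeff_homComp]
  by_cases hv : w = v
  · subst hv; split_ifs <;> simp
  · split_ifs <;> simp [MonoidAlgebra.coeff_single, hv]

lemma homComp_single_mul (v : FreeMonoid Y) (d : ℕ) (f : FA K Y) :
    homComp K (FreeMonoid.length v + d) (MonoidAlgebra.single v 1 * f) =
      MonoidAlgebra.single v 1 * homComp K d f := by
  induction f using MonoidAlgebra.induction_linear with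
  | zero => simp [homComp]
  | add f g hf hg => rw [mul_add, homComp_add, homComp_add, hf, hg, mul_add]
  | single w c =>
    rw [MonoidAlgebra.single_mul_single, one_mul, homComp_single, homComp_single,
      FreeMonoid.length_mul]
    split_ifs <;> simp_all

end Homogeneous

section Saturation

variable {K : Type*} [Field K] {X : Type*}

lemma tv_eq_single : tv K (X := X) = MonoidAlgebra.single (FreeMonoid.of none) 1 := rfl

lemma isHomog_tv_pow (m : ℕ) : IsHomog K m (tv K (X := X) ^ m) := isHomog_gen_pow none m

lemma phi_tv : phi K (tv K (X := X)) = 1 := by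
  rw [phi, tv, gen, MonoidAlgebra.lift_of]
  rfl

lemma phi_tv_pow_mul (m : ℕ) (f : FA K (Option X)) : phi K (tv K ^ m * f) = phi K f := by
  rw [map_mul, map_pow, phi_tv, one_pow, one_mul]

lemma homComp_tv_mul (d : ℕ) (f : FA K (Option X)) :
    homComp K (d + 1) (tv K * f) = tv K * homComp K d f := by
  rw [tv_eq_single, ← homComp_single_mul, FreeMonoid.length_of, add_comm]

lemma mem_cideal_of_isHomog {d : ℕ} {u : FA K (Option X)} (hu : IsHomog K d u)
    (hφ : phi K u = 0) : u ∈ Cideal K :=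
  TwoSidedIdeal.subset_span ⟨⟨d, hu⟩, hφ⟩

variable {J : TwoSidedIdeal (FA K (Option X))}

lemma le_satF (hJ : IsGradedF K J) : J ≤ SatF K J := by
  intro f hf
  rw [← sum_homComp f]
  exact sum_mem fun d _ =>
    TwoSidedIdeal.subset_span ⟨⟨d, isHomog_homComp d f⟩, homComp K d f, hJ f hf d, rfl⟩

lemma mem_satF_of_tv_mul_mem (hJ : IsGradedF K J) {f : FA K (Option X)} (hf : tv K * f ∈ J) :
    f ∈ SatF K J := by
  rw [← sum_homComp f]
  refine sum_mem fun d _ => TwoSidedIdeal.subset_span ⟨⟨d, isHomog_homComp d f⟩, ?_⟩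
  refine ⟨tv K * homComp K d f, ?_, by rw [← pow_one (tv K), phi_tv_pow_mul]⟩
  rw [← homComp_tv_mul]
  exact hJ _ hf _

lemma mem_of_tv_pow_mul_mem (hT : ∀ f, tv K * f ∈ J → f ∈ J) (m : ℕ) {f : FA K (Option X)}
    (hf : tv K ^ m * f ∈ J) : f ∈ J := by
  induction m with
  | zero => simpa using hf
  | succ m ih => exact ih (hT _ (by rwa [pow_succ', mul_assoc] at hf))

lemma tv_pow_mul_mem_of_phi_eq (hJ : IsGradedF K J) (hC : Cideal K ≤ J) {d : ℕ}
    {g h : FA K (Option X)} (hg : IsHomog K d g) (hh : h ∈ J) (hφ : phi K g = phi K h) :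
    tv K ^ degF K h * g ∈ J := by
  set M := degF K h
  -- `s` is the homogenization of `h`, multiplied by `t^d` to match the degree `M + d` of `t^M g`
  set s := ∑ k ∈ Finset.range (M + 1), tv K ^ (M + d - k) * homComp K k h
  have hs_mem : s ∈ J := sum_mem fun k _ => J.mul_mem_left _ _ (hJ h hh k)
  have hs_homog : IsHomog K (M + d) s := isHomog_sum _ _ _ fun k hk => by
    have hkM : M + d - k + k = M + d := by have := Finset.mem_range.1 hk; omega
    simpa only [hkM] using (isHomog_tv_pow (M + d - k)).mul (isHomog_homComp k h)
  have hs_phi : phi K s = phi K h := by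
    rw [map_sum, Finset.sum_congr rfl fun k _ => phi_tv_pow_mul _ _, ← map_sum, sum_homComp]
  have hdiff : tv K ^ M * g - s ∈ J := hC <| mem_cideal_of_isHomog
    ((isHomog_tv_pow M).mul hg |>.sub hs_homog)
    (by rw [map_sub, phi_tv_pow_mul, hφ, hs_phi, sub_self])
  simpa using add_mem hdiff hs_mem

lemma satF_le (hJ : IsGradedF K J) (hC : Cideal K ≤ J) (hT : ∀ f, tv K * f ∈ J → f ∈ J) :
    SatF K J ≤ J := by
  intro g hg
  rw [SatF, TwoSidedIdeal.mem_span_iff] at hg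
  refine hg J ?_
  rintro g ⟨⟨d, hgd⟩, h, hh, hφ⟩
  exact mem_of_tv_pow_mul_mem hT _ (tv_pow_mul_mem_of_phi_eq hJ hC hgd hh hφ)

end Saturation

theorem statement_2_general (K : Type*) [Field K] (X : Type*)
    (J : TwoSidedIdeal (FA K (Option X))) (hJ : IsGradedF K J) (hC : Cideal K ≤ J) :
    SatF K J = J ↔ ∀ f : FA K (Option X), tv K * f ∈ J → f ∈ J := by
  refine ⟨fun hS f hf => hS ▸ mem_satF_of_tv_mul_mem hJ hf, fun hT => ?_⟩
  exact le_antisymm (satF_le hJ hC hT) (le_satF hJ)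

/-- A graded two-sided ideal `J ⊆ F̄` with `C ⊆ J` is saturated
(`J = Sat(J) = φ(J)^*`) if and only if `t·f ∈ J` implies `f ∈ J`. -/
theorem statement_2 (K : Type*) [Field K] (X : Type*) [Countable X]
    (J : TwoSidedIdeal (FA K (Option X))) (hJ : IsGradedF K J) (hC : Cideal K ≤ J) :
    SatF K J = J ↔ ∀ f : FA K (Option X), tv K * f ∈ J → f ∈ J :=
  statement_2_general K X J hJ hC
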